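/- arXiv:1305.2618 — 3 statements merged into one kernel-verified Lean document; each statement's English description precedes it below -/
import Mathlib

section
/- If a Banach space Y is reflexive and every weakly convergent sequence in Y converges in norm, then Y is finite dimensional. -/
/-!
A bounded sequence in a reflexive space has a weakly convergent subsequence. Its closed span `Z` is
separable and, as a closed subspace of a reflexive space, reflexive; hence `Z**` is separable, so
`Z*` is separable, and the sequential Banach–Alaoglu theorem in `Z** = (Z*)*` extracts a weak-*
convergent subsequence whose limit lies in `Z`. Under the Schur property that subsequence converges
in norm, so the closed unit ball is compact and Riesz's theorem gives finite dimension.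
-/

open NormedSpace Filter

/-- A sequence converges weakly to `y` if its pairing with every continuous
linear functional converges to the pairing of `y`. -/
def WeaklyConvergesTo {W : Type*} [NormedAddCommGroup W] [NormedSpace ℂ W]
    (x : ℕ → W) (y : W) : Prop :=
  ∀ φ : StrongDual ℂ W, Tendsto (fun m => φ (x m)) atTop (nhds (φ y))

/-- A Banach space is reflexive if the canonical embedding into its bidual is
surjective. -/
def IsReflexiveSpace (W : Type*) [NormedAddCommGroup W] [NormedSpace ℂ W] : Prop :=
  Function.Surjective (inclusionInDoubleDual ℂ W)

open Topology

section

variable {𝕜 X : Type*} [RCLike 𝕜] [NormedAddCommGroup X] [NormedSpace 𝕜 X]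

theorem Submodule.exists_dual_eq_zero_of_notMem {W : Submodule 𝕜 X} (hW : IsClosed (W : Set X))
    {y : X} (hy : y ∉ W) :
    ∃ ψ : StrongDual 𝕜 X, (∀ w ∈ W, ψ w = 0) ∧ ψ y ≠ 0 := by
  have : IsClosed (W : Set X) := hW
  have hy' : W.mkQL y ≠ 0 := by simpa [Submodule.Quotient.mk_eq_zero] using hy
  obtain ⟨g, hg⟩ := SeparatingDual.exists_ne_zero (R := 𝕜) hy'
  exact ⟨g.comp W.mkQL, fun w hw => by simp [(Submodule.Quotient.mk_eq_zero W).2 hw], hg⟩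

theorem ContinuousLinearMap.exists_norm_le_one_opNorm_le_two_mul (g : StrongDual 𝕜 X) :
    ∃ v : X, ‖v‖ ≤ 1 ∧ ‖g‖ ≤ 2 * ‖g v‖ := by
  rcases eq_or_ne g 0 with rfl | hg
  · exact ⟨0, by simp⟩
  · obtain ⟨v, hv, hgv⟩ := g.exists_lt_apply_of_lt_opNorm (half_lt_self (norm_pos_iff.2 hg))
    exact ⟨v, hv.le, by linarith⟩

theorem TopologicalSpace.SeparableSpace.of_strongDual
    [TopologicalSpace.SeparableSpace (StrongDual 𝕜 X)] :
    TopologicalSpace.SeparableSpace X := by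
  obtain ⟨D, hD_countable, hD_dense⟩ := TopologicalSpace.exists_countable_dense (StrongDual 𝕜 X)
  choose v hv_norm hv_apply using
    ContinuousLinearMap.exists_norm_le_one_opNorm_le_two_mul (𝕜 := 𝕜) (X := X)
  set W := (Submodule.span 𝕜 (v '' D)).topologicalClosure
  have hW : W = ⊤ := by
    refine Submodule.eq_top_iff'.2 fun y => by_contra fun hy => ?_
    obtain ⟨ψ, hψW, hψy⟩ :=
      W.exists_dual_eq_zero_of_notMem (Submodule.isClosed_topologicalClosure _) hy
    -- `ψ` kills the vector `v g` on which `g` is almost normed, so `g` cannot be close to `ψ`.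
    have hψ_far : ∀ g ∈ D, ‖ψ‖ ≤ 3 * ‖g - ψ‖ := fun g hg => by
      have hψv : ψ (v g) = 0 :=
        hψW _ (Submodule.le_topologicalClosure _ (Submodule.subset_span ⟨g, hg, rfl⟩))
      have : ‖g‖ ≤ 2 * ‖g - ψ‖ := calc
        ‖g‖ ≤ 2 * ‖(g - ψ) (v g)‖ := by simpa [hψv] using hv_apply g
        _ ≤ 2 * ‖g - ψ‖ := by gcongr; exact (g - ψ).unit_le_opNorm _ (hv_norm g)
      have hψ_le := norm_sub_le g (g - ψ)
      rw [sub_sub_cancel] at hψ_le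
      linarith
    have : ‖ψ‖ ≤ 3 * ‖ψ - ψ‖ :=
      (isClosed_le continuous_const (by fun_prop) : IsClosed {g | ‖ψ‖ ≤ 3 * ‖g - ψ‖}
        ).closure_subset_iff.2 hψ_far (hD_dense ψ)
    have hψ0 : ψ = 0 := norm_le_zero_iff.1 (by simpa using this)
    exact hψy (by simp [hψ0])
  have hW_sep : TopologicalSpace.IsSeparable (W : Set X) :=
    ((hD_countable.image v).isSeparable.span (R := 𝕜)).closure
  rw [hW] at hW_sep
  exact TopologicalSpace.isSeparable_univ_iff.1 hW_sep

theorem Submodule.surjective_inclusionInDoubleDual_of_isClosed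
    (hX : Function.Surjective (inclusionInDoubleDual 𝕜 X)) {Z : Submodule 𝕜 X}
    (hZ : IsClosed (Z : Set X)) : Function.Surjective (inclusionInDoubleDual 𝕜 Z) := by
  let restrict : StrongDual 𝕜 X →L[𝕜] StrongDual 𝕜 Z := ContinuousLinearMap.precomp 𝕜 Z.subtypeL
  intro F
  obtain ⟨y, hy⟩ := hX (F.comp restrict)
  have hy_apply (ψ : StrongDual 𝕜 X) : ψ y = F (restrict ψ) := congr($hy ψ)
  have hyZ : y ∈ Z := by
    by_contra hyZ
    obtain ⟨ψ, hψZ, hψy⟩ := Z.exists_dual_eq_zero_of_notMem hZ hyZ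
    have : restrict ψ = 0 := ContinuousLinearMap.ext fun z => hψZ z z.2
    exact hψy (by rw [hy_apply, this, map_zero])
  refine ⟨⟨y, hyZ⟩, ContinuousLinearMap.ext fun φ => ?_⟩
  obtain ⟨ψ, hψ, -⟩ := exists_extension_norm_eq Z φ
  have : restrict ψ = φ := ContinuousLinearMap.ext hψ
  rw [dual_def, ← hψ, ← this]
  exact hy_apply ψ

theorem exists_strictMono_tendsto_apply_of_separableSpace_strongDual
    [TopologicalSpace.SeparableSpace (StrongDual 𝕜 X)]
    (hX : Function.Surjective (inclusionInDoubleDual 𝕜 X)) {x : ℕ → X} {R : ℝ}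
    (hx : ∀ n, ‖x n‖ ≤ R) :
    ∃ z : X, ∃ θ : ℕ → ℕ, StrictMono θ ∧
      ∀ φ : StrongDual 𝕜 X, Tendsto (fun k => φ (x (θ k))) atTop (𝓝 (φ z)) := by
  obtain ⟨F, -, θ, hθ, hF⟩ := WeakDual.isSeqCompact_closedBall 𝕜 (StrongDual 𝕜 X) 0 R
    (x := fun n => StrongDual.toWeakDual (inclusionInDoubleDual 𝕜 X (x n))) fun n => by
      simpa using (double_dual_bound 𝕜 X (x n)).trans (hx n)
  obtain ⟨z, hz⟩ := hX (WeakDual.toStrongDual F)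
  subst hz
  exact ⟨z, θ, hθ, fun φ => ((WeakDual.eval_continuous φ).tendsto _).comp hF⟩

end

theorem IsReflexiveSpace.exists_strictMono_weaklyConvergesTo {Y : Type*} [NormedAddCommGroup Y]
    [NormedSpace ℂ Y] (hY : IsReflexiveSpace Y) {x : ℕ → Y} {R : ℝ} (hx : ∀ n, ‖x n‖ ≤ R) :
    ∃ z : Y, ∃ θ : ℕ → ℕ, StrictMono θ ∧ WeaklyConvergesTo (x ∘ θ) z := by
  let Z := (Submodule.span ℂ (Set.range x)).topologicalClosure
  have hZ_refl : Function.Surjective (inclusionInDoubleDual ℂ Z) :=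
    Submodule.surjective_inclusionInDoubleDual_of_isClosed hY
      (Submodule.isClosed_topologicalClosure _)
  have : TopologicalSpace.SeparableSpace Z :=
    ((Set.countable_range x).isSeparable.span (R := ℂ)).closure.separableSpace
  have : TopologicalSpace.SeparableSpace (StrongDual ℂ (StrongDual ℂ Z)) :=
    hZ_refl.denseRange.separableSpace (inclusionInDoubleDual ℂ Z).continuous
  have : TopologicalSpace.SeparableSpace (StrongDual ℂ Z) :=
    .of_strongDual (𝕜 := ℂ) (X := StrongDual ℂ Z)
  let xZ (n : ℕ) : Z := ⟨x n, Submodule.le_topologicalClosure _ (Submodule.subset_span ⟨n, rfl⟩)⟩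
  obtain ⟨z, θ, hθ, hz⟩ := exists_strictMono_tendsto_apply_of_separableSpace_strongDual hZ_refl
    (x := xZ) hx
  exact ⟨z, θ, hθ, fun ψ => hz (ψ.comp Z.subtypeL)⟩

theorem reflexive_schur_finiteDimensional_general
    (Y : Type*) [NormedAddCommGroup Y] [NormedSpace ℂ Y]
    (hschur : ∀ (x : ℕ → Y) (y : Y), WeaklyConvergesTo x y →
      Tendsto x atTop (nhds y))
    (hrefl : IsReflexiveSpace Y) :
    FiniteDimensional ℂ Y := by
  refine FiniteDimensional.of_isCompact_closedBall₀ ℂ one_pos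
    (IsSeqCompact.isCompact fun x hx => ?_)
  obtain ⟨z, θ, hθ, hweak⟩ :=
    hrefl.exists_strictMono_weaklyConvergesTo (R := 1) (fun n => by simpa using hx n)
  have hnorm := hschur _ _ hweak
  exact ⟨z, Metric.isClosed_closedBall.mem_of_tendsto hnorm (Eventually.of_forall fun k => hx _),
    θ, hθ, hnorm⟩

/-- A reflexive Banach space in which every weakly convergent sequence
converges in norm is finite dimensional. -/
theorem reflexive_schur_finiteDimensional
    (Y : Type*) [NormedAddCommGroup Y] [NormedSpace ℂ Y] [CompleteSpace Y]
    (hschur : ∀ (x : ℕ → Y) (y : Y), WeaklyConvergesTo x y →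
      Tendsto x atTop (nhds y))
    (hrefl : IsReflexiveSpace Y) :
    FiniteDimensional ℂ Y :=
  reflexive_schur_finiteDimensional_general Y hschur hrefl
end

section
/- Let W be a weakly sequentially complete Banach space and T : W → C₀(ℝⁿ) a bounded, linear, injective map. Let Y be a closed subspace of C₀(ℝⁿ) contained in T(W). Then there exist positive numbers α and C, independent of F ∈ Y, such that ‖F‖_∞ ≤ C · sup{|F(ξ)| : |ξ| ≤ α} for all F ∈ Y. -/
open NormedSpace Filter ZeroAtInfty

/-- A sequence is weakly Cauchy if its pairing with every continuous linear
functional is a Cauchy sequence of scalars. -/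
def WeaklyCauchy {W : Type*} [NormedAddCommGroup W] [NormedSpace ℂ W]
    (x : ℕ → W) : Prop :=
  ∀ φ : StrongDual ℂ W, CauchySeq fun m => φ (x m)

/-- A space is weakly sequentially complete if every weakly Cauchy sequence
converges weakly. -/
def WeaklySeqComplete (W : Type*) [NormedAddCommGroup W] [NormedSpace ℂ W] : Prop :=
  ∀ x : ℕ → W, WeaklyCauchy x → ∃ y : W, WeaklyConvergesTo x y

/-!
If no such `α`, `C` exist, there are `F j ∈ Y` of norm one whose large sets
`{ξ | δ j < ‖F j ξ‖}` lie in disjoint shells escaping to infinity, where `∑ δ j = 1 / 4`.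
Truncating each `F j` at height `δ j` gives disjointly supported functions, so
`∑ ‖Λ (F j)‖ < ∞` for every `Λ ∈ C₀(ℝⁿ)*`. The inverse of `T` on `Y` is bounded by the open
mapping theorem, so by Hahn–Banach the partial sums of `∑ T⁻¹ (F j)` are weakly Cauchy in `W` and
converge weakly to some `y`. Then `T y = ∑ F j` pointwise, and `‖T y‖ ≥ 1 / 4` somewhere in every
shell, contradicting `T y ∈ C₀(ℝⁿ)`.
-/

open Function

namespace ZeroAtInftyContinuousMap

variable {X β : Type*} [TopologicalSpace X] [NormedAddCommGroup β]

theorem norm_apply_le (f : C₀(X, β)) (x : X) : ‖f x‖ ≤ ‖f‖ :=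
  f.toBCF.norm_coe_le_norm x

theorem exists_lt_norm_apply {f : C₀(X, β)} {r : ℝ} (hr₀ : 0 ≤ r) (hr : r < ‖f‖) :
    ∃ x, r < ‖f x‖ := by
  by_contra! h
  exact hr.not_ge <| (BoundedContinuousFunction.norm_le hr₀).2 h

section evalCLM

variable (𝕜 : Type*) [NormedField 𝕜] [NormedSpace 𝕜 β]

noncomputable def evalCLM (x : X) : C₀(X, β) →L[𝕜] β :=
  LinearMap.mkContinuous
    { toFun f := f x
      map_add' _ _ := rfl
      map_smul' _ _ := rfl }
    1 fun f => by simpa using norm_apply_le f x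

@[simp]
theorem evalCLM_apply (x : X) (f : C₀(X, β)) : evalCLM 𝕜 x f = f x := rfl

end evalCLM

theorem exists_forall_norm_apply_lt {E : Type*} [SeminormedAddCommGroup E] (f : C₀(E, β))
    {ε : ℝ} (hε : 0 < ε) :
    ∃ R, ∀ ξ, R ≤ ‖ξ‖ → ‖f ξ‖ < ε := by
  have : ∀ᶠ ξ in Bornology.cobounded E, ‖f ξ‖ < ε :=
    ((zero_at_infty f).norm.mono_left Metric.cobounded_le_cocompact).eventually_lt_const
      (by simpa using hε)
  simpa using (hasBasis_cobounded_norm.eventually_iff).1 this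

section Disjoint

variable {ι 𝕜 : Type*} [RCLike 𝕜]

theorem exists_support_subset_norm_sub_le [NormedSpace ℝ β] (f : C₀(X, β)) {δ : ℝ} (hδ : 0 < δ) :
    ∃ P : C₀(X, β), ‖P‖ ≤ ‖f‖ ∧ support P ⊆ {x | δ < ‖f x‖} ∧ ‖f - P‖ ≤ δ := by
  -- `P = f - r ∘ f`, where `r z = (δ / max ‖z‖ δ) • z` is the radial retraction onto the `δ`-ball
  set c : X → ℝ := fun x => 1 - δ / max ‖f x‖ δ
  have hmax : ∀ x, 0 < max ‖f x‖ δ := fun x => lt_max_of_lt_right hδ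
  have hc₀ : ∀ x, 0 ≤ c x := fun x => sub_nonneg.2 <| (div_le_one (hmax x)).2 (le_max_right _ _)
  have hc₁ : ∀ x, c x ≤ 1 := fun x => sub_le_self _ (div_nonneg hδ.le (hmax x).le)
  have hcf : ∀ x, ‖c x • f x‖ ≤ ‖f x‖ := fun x => by
    rw [norm_smul, Real.norm_of_nonneg (hc₀ x)]
    exact mul_le_of_le_one_left (norm_nonneg _) (hc₁ x)
  let P : C₀(X, β) :=
    { toFun x := c x • f x
      continuous_toFun := (continuous_const.sub (continuous_const.div
        (f.continuous.norm.max continuous_const) fun x => (hmax x).ne')).smul f.continuous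
      zero_at_infty' := squeeze_zero_norm hcf (by simpa using (zero_at_infty f).norm) }
  refine ⟨P, ?_, fun x hx => ?_, ?_⟩
  · exact (BoundedContinuousFunction.norm_le (norm_nonneg _)).2 fun x =>
      (hcf x).trans (norm_apply_le f x)
  · by_contra hfx
    have : max ‖f x‖ δ = δ := max_eq_right (not_lt.1 hfx)
    exact hx (by simp [P, c, this, hδ.ne'])
  · refine (BoundedContinuousFunction.norm_le hδ.le).2 fun x => ?_
    have : f x - c x • f x = (δ / max ‖f x‖ δ) • f x := by simp [c, sub_smul]
    change ‖f x - c x • f x‖ ≤ δ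
    rw [this, norm_smul, Real.norm_of_nonneg (div_nonneg hδ.le (hmax x).le), div_mul_comm]
    exact mul_le_of_le_one_left hδ.le ((div_le_one (hmax x)).2 (le_max_left _ _))

theorem norm_sum_smul_le_one {P : ι → C₀(X, 𝕜)} (hP : ∀ j, ‖P j‖ ≤ 1)
    (hdisj : Pairwise (Disjoint on fun j => support (P j))) {c : ι → 𝕜}
    (hc : ∀ j, ‖c j‖ ≤ 1) (s : Finset ι) : ‖∑ j ∈ s, c j • P j‖ ≤ 1 := by
  refine (BoundedContinuousFunction.norm_le zero_le_one).2 fun x => ?_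
  change ‖evalCLM 𝕜 x (∑ j ∈ s, c j • P j)‖ ≤ 1
  simp only [map_sum, map_smul, evalCLM_apply, smul_eq_mul]
  by_cases hx : ∃ i ∈ s, P i x ≠ 0
  · obtain ⟨i, his, hi⟩ := hx
    rw [Finset.sum_eq_single_of_mem i his fun j _ hji => ?_, norm_mul]
    · exact mul_le_one₀ (hc i) (norm_nonneg _) ((norm_apply_le _ x).trans (hP i))
    · rw [notMem_support.1 fun hj => Set.disjoint_left.1 (hdisj hji) hj hi, mul_zero]
  · push Not at hx
    rw [Finset.sum_eq_zero fun j hj => by rw [hx j hj, mul_zero], norm_zero]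
    exact zero_le_one

theorem sum_norm_apply_le_opNorm (Λ : StrongDual 𝕜 C₀(X, 𝕜)) {P : ι → C₀(X, 𝕜)}
    (hP : ∀ j, ‖P j‖ ≤ 1) (hdisj : Pairwise (Disjoint on fun j => support (P j)))
    (s : Finset ι) : ∑ j ∈ s, ‖Λ (P j)‖ ≤ ‖Λ‖ := by
  -- `u j` rotates `Λ (P j)` onto the positive real axis
  set u : ι → 𝕜 := fun j => (starRingEnd 𝕜) (Λ (P j)) / ‖Λ (P j)‖
  have hu : ∀ j, ‖u j‖ ≤ 1 := fun j => by
    simpa [u, norm_div] using div_self_le_one ‖Λ (P j)‖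
  have huΛ : ∀ j, u j * Λ (P j) = ‖Λ (P j)‖ := fun j => by
    rcases eq_or_ne (Λ (P j)) 0 with h | h
    · simp [u, h]
    · rw [div_mul_eq_mul_div, RCLike.conj_mul, sq, mul_div_assoc, div_self (by simpa using h),
        mul_one]
  calc ∑ j ∈ s, ‖Λ (P j)‖ = ‖Λ (∑ j ∈ s, u j • P j)‖ := by
        simp only [map_sum, map_smul, smul_eq_mul, huΛ]
        rw [← RCLike.ofReal_sum, RCLike.norm_ofReal,
          abs_of_nonneg (Finset.sum_nonneg fun j _ => norm_nonneg _)]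
    _ ≤ ‖Λ‖ * 1 := Λ.le_opNorm_of_le (norm_sum_smul_le_one hP hdisj hu s)
    _ = ‖Λ‖ := mul_one _

theorem summable_norm_apply_of_pairwise_disjoint (Λ : StrongDual 𝕜 C₀(X, 𝕜))
    {F : ι → C₀(X, 𝕜)} {δ : ι → ℝ} (hδ : ∀ j, 0 < δ j) (hδs : Summable δ) (hF : ∀ j, ‖F j‖ ≤ 1)
    (hdisj : Pairwise (Disjoint on fun j => {x | δ j < ‖F j x‖})) :
    Summable fun j => ‖Λ (F j)‖ := by
  choose P hPF hPsupp hFP using fun j => exists_support_subset_norm_sub_le (F j) (hδ j)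
  have hP : Summable fun j => ‖Λ (P j)‖ :=
    summable_of_sum_le (fun j => norm_nonneg _) <| sum_norm_apply_le_opNorm Λ
      (fun j => (hPF j).trans (hF j)) (hdisj.mono fun i j h => h.mono (hPsupp i) (hPsupp j))
  refine Summable.of_nonneg_of_le (fun j => norm_nonneg _) (fun j => ?_)
    (hP.add (hδs.mul_left ‖Λ‖))
  calc ‖Λ (F j)‖ = ‖Λ (P j) + Λ (F j - P j)‖ := by rw [map_sub, add_sub_cancel]
    _ ≤ ‖Λ (P j)‖ + ‖Λ‖ * δ j := norm_add_le_of_le le_rfl (Λ.le_opNorm_of_le (hFP j))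

end Disjoint

theorem exists_norm_eq_one_forall_norm_apply_le {𝕜 : Type*} [RCLike 𝕜]
    {Y : Submodule 𝕜 C₀(X, 𝕜)} {s : Set X} (h : ∀ C > 0, ∃ F ∈ Y, C * ⨆ ξ : s, ‖F ξ‖ < ‖F‖)
    {ε : ℝ} (hε : 0 < ε) :
    ∃ F ∈ Y, ‖F‖ = 1 ∧ ∀ ξ ∈ s, ‖F ξ‖ ≤ ε := by
  obtain ⟨F, hFY, hF⟩ := h ε⁻¹ (inv_pos.2 hε)
  have hsup : ∀ ξ ∈ s, ‖F ξ‖ ≤ ⨆ ξ : s, ‖F ξ‖ := fun ξ hξ =>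
    le_ciSup (f := fun ξ : s => ‖F ξ‖) ⟨‖F‖, Set.forall_mem_range.2 fun ξ => norm_apply_le F ξ⟩
      ⟨ξ, hξ⟩
  have hF₀ : 0 < ‖F‖ :=
    (mul_nonneg (inv_nonneg.2 hε.le) (Real.iSup_nonneg fun _ => norm_nonneg _)).trans_lt hF
  refine ⟨(‖F‖⁻¹ : 𝕜) • F, Y.smul_mem _ hFY, norm_smul_inv_norm (norm_pos_iff.1 hF₀),
    fun ξ hξ => ?_⟩
  rw [coe_smul, Pi.smul_apply, norm_smul, norm_inv, RCLike.norm_ofReal, abs_norm,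
    inv_mul_le_iff₀ hF₀]
  rw [inv_mul_lt_iff₀ hε] at hF
  exact (hsup ξ hξ).trans (mul_comm ε _ ▸ hF.le)

theorem exists_seq_norm_eq_one_pairwise_disjoint {E : Type*} [SeminormedAddCommGroup E]
    {Y : Set C₀(E, β)} (hY : ∀ α ε : ℝ, 0 < ε → ∃ F ∈ Y, ‖F‖ = 1 ∧ ∀ ξ, ‖ξ‖ ≤ α → ‖F ξ‖ ≤ ε)
    {δ : ℕ → ℝ} (hδ : ∀ j, 0 < δ j) :
    ∃ F : ℕ → C₀(E, β), (∀ j, F j ∈ Y ∧ ‖F j‖ = 1) ∧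
      Pairwise (Disjoint on fun j => {ξ | δ j < ‖F j ξ‖}) ∧
      ∀ j ξ, δ j < ‖F j ξ‖ → (j : ℝ) ≤ ‖ξ‖ := by
  have step : ∀ j (α : ℝ), ∃ F ∈ Y, ‖F‖ = 1 ∧ ∃ b, ∀ ξ, δ j < ‖F ξ‖ → ‖ξ‖ ∈ Set.Ioo α b := by
    intro j α
    obtain ⟨F, hFY, hF1, hFα⟩ := hY α (δ j) (hδ j)
    obtain ⟨b, hb⟩ := exists_forall_norm_apply_lt F (hδ j)
    exact ⟨F, hFY, hF1, b, fun ξ hξ =>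
      ⟨lt_of_not_ge fun h => (hFα ξ h).not_gt hξ, lt_of_not_ge fun h => (hb ξ h).not_gt hξ⟩⟩
  choose F hFY hF1 b hb using step
  let a : ℕ → ℝ := fun j => Nat.rec 0 (fun j aj => max (b j aj) (aj + 1)) j
  have ha : ∀ j, a (j + 1) = max (b j (a j)) (a j + 1) := fun j => rfl
  have hshell : ∀ j, {ξ | δ j < ‖F j (a j) ξ‖} ⊆ norm ⁻¹' Set.Ioo (a j) (a (j + 1)) :=
    fun j ξ hξ => ⟨(hb j _ ξ hξ).1, (hb j _ ξ hξ).2.trans_le (ha j ▸ le_max_left _ _)⟩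
  have hsucc : ∀ j, a j + 1 ≤ a (j + 1) := fun j => (ha j).symm ▸ le_max_right _ _
  have hge : ∀ j : ℕ, (j : ℝ) ≤ a j := fun j => by
    induction j with
    | zero => simp [a]
    | succ j ih => push_cast; linarith [hsucc j]
  refine ⟨fun j => F j (a j), fun j => ⟨hFY _ _, hF1 _ _⟩, ?_,
    fun j ξ hξ => (hge j).trans (hshell j hξ).1.le⟩
  have hmono : Monotone a := monotone_nat_of_le_succ fun j => by linarith [hsucc j]
  exact hmono.pairwise_disjoint_on_Ioo_succ.mono fun i j h =>
    (h.preimage norm).mono (hshell i) (hshell j)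

end ZeroAtInftyContinuousMap

theorem HasSum.norm_sub_le_of_forall_ne {ι E : Type*} [DecidableEq ι] [NormedAddCommGroup E]
    {v : ι → E} {a : E} (hv : HasSum v a) {δ : ι → ℝ} (hδ : Summable δ) (hδ₀ : ∀ j, 0 ≤ δ j)
    {k : ι} (hk : ∀ j ≠ k, ‖v j‖ ≤ δ j) : ‖a - v k‖ ≤ ∑' j, δ j := by
  have := (hv.update k 0).norm_le_of_bounded hδ.hasSum fun j => ?_
  · rwa [zero_sub, neg_add_eq_sub] at this
  rcases eq_or_ne j k with rfl | hj
  · simpa using hδ₀ j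
  · simpa [hj] using hk j hj

theorem ContinuousLinearMap.exists_rightInverse_of_injective {𝕜 V W : Type*}
    [NontriviallyNormedField 𝕜] [NormedAddCommGroup V] [NormedSpace 𝕜 V] [CompleteSpace V]
    [NormedAddCommGroup W] [NormedSpace 𝕜 W] [CompleteSpace W] (T : W →L[𝕜] V)
    (hT : Injective T) (Y : Submodule 𝕜 V) (hY : IsClosed (Y : Set V))
    (hYT : (Y : Set V) ⊆ Set.range T) : ∃ S : Y →L[𝕜] W, ∀ y, T (S y) = y := by
  let W' := Y.comap (T : W →ₗ[𝕜] V)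
  have : CompleteSpace W' := (hY.preimage T.continuous).completeSpace_coe
  have : CompleteSpace Y := hY.completeSpace_coe
  let T' : W' →L[𝕜] Y := (T.comp W'.subtypeL).codRestrict Y fun w => w.2
  have hinj : Injective T' := fun w w' h => Subtype.ext (hT (congrArg Subtype.val h))
  have hsurj : Surjective T' := fun y => by
    obtain ⟨w, hw⟩ := hYT y.2
    exact ⟨⟨w, by simp [W', hw]⟩, Subtype.ext hw⟩
  let e := ContinuousLinearEquiv.ofBijective T' (LinearMap.ker_eq_bot.2 hinj)
    (LinearMap.range_eq_top.2 hsurj)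
  exact ⟨W'.subtypeL.comp (e.symm : Y →L[𝕜] W'),
    fun y => congrArg Subtype.val (e.apply_symm_apply y)⟩

theorem WeaklySeqComplete.exists_hasSum {W : Type*} [NormedAddCommGroup W] [NormedSpace ℂ W]
    (hW : WeaklySeqComplete W) {g : ℕ → W}
    (hg : ∀ φ : StrongDual ℂ W, Summable fun j => φ (g j)) :
    ∃ y, ∀ φ : StrongDual ℂ W, HasSum (fun j => φ (g j)) (φ y) := by
  have hpartial : ∀ φ : StrongDual ℂ W, (fun N => φ (∑ j ∈ Finset.range N, g j)) =
      fun N => ∑ j ∈ Finset.range N, φ (g j) := fun φ => funext fun N => map_sum φ _ _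
  obtain ⟨y, hy⟩ := hW _ fun φ => by
    rw [hpartial]
    exact (hg φ).hasSum.tendsto_sum_nat.cauchySeq
  exact ⟨y, fun φ => (hg φ).hasSum_iff_tendsto_nat.2 (hpartial φ ▸ hy φ)⟩

open ZeroAtInftyContinuousMap

/-- If `W` is weakly sequentially complete, `T : W → C₀(ℝⁿ)` is bounded linear
and injective, and `Y` is a closed subspace of `C₀(ℝⁿ)` contained in `T(W)`,
then the sup norm on `Y` is controlled by the sup over a fixed ball. -/
theorem norm_le_ball_sup_of_weaklySeqComplete {n : ℕ}
    (W : Type*) [NormedAddCommGroup W] [NormedSpace ℂ W] [CompleteSpace W]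
    (hW : WeaklySeqComplete W)
    (T : W →L[ℂ] C₀(EuclideanSpace ℝ (Fin n), ℂ)) (hT : Function.Injective T)
    (Y : Subspace ℂ C₀(EuclideanSpace ℝ (Fin n), ℂ))
    (hclosed : IsClosed (Y : Set C₀(EuclideanSpace ℝ (Fin n), ℂ)))
    (hsub : (Y : Set C₀(EuclideanSpace ℝ (Fin n), ℂ)) ⊆ Set.range T) :
    ∃ α > (0 : ℝ), ∃ C > (0 : ℝ), ∀ F ∈ Y,
      ‖F‖ ≤ C * ⨆ ξ : Metric.closedBall (0 : EuclideanSpace ℝ (Fin n)) α, ‖F ↑ξ‖ := by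
  by_contra! hcon
  set δ : ℕ → ℝ := fun j => 1 / 4 / 2 / 2 ^ j
  have hδ : ∀ j, 0 < δ j := fun j => by positivity
  have hsmall : ∀ α ε : ℝ, 0 < ε → ∃ F ∈ (Y : Set C₀(EuclideanSpace ℝ (Fin n), ℂ)),
      ‖F‖ = 1 ∧ ∀ ξ, ‖ξ‖ ≤ α → ‖F ξ‖ ≤ ε := fun α ε hε => by
    obtain ⟨F, hFY, hF1, hF⟩ :=
      exists_norm_eq_one_forall_norm_apply_le (hcon (max α 1) (by positivity)) hε
    exact ⟨F, hFY, hF1, fun ξ hξ => hF ξ (mem_closedBall_zero_iff.2 (hξ.trans (le_max_left _ _)))⟩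
  obtain ⟨F, hF, hdisj, hfar⟩ := exists_seq_norm_eq_one_pairwise_disjoint hsmall hδ
  obtain ⟨S, hS⟩ := T.exists_rightInverse_of_injective hT Y hclosed hsub
  obtain ⟨y, hy⟩ := hW.exists_hasSum (g := fun j => S ⟨F j, (hF j).1⟩) fun φ => by
    obtain ⟨Λ, hΛ, -⟩ := exists_extension_norm_eq Y (φ.comp S)
    refine (summable_norm_apply_of_pairwise_disjoint Λ hδ (summable_geometric_two' _)
      (fun j => (hF j).2.le) hdisj).of_norm.congr fun j => ?_
    simpa using hΛ ⟨F j, (hF j).1⟩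
  have hTy : ∀ ξ, HasSum (fun j => F j ξ) (T y ξ) := fun ξ => by
    simpa [hS] using hy ((evalCLM ℂ ξ).comp T)
  obtain ⟨R, hR⟩ := exists_forall_norm_apply_lt (T y) (by norm_num : (0 : ℝ) < 1 / 4)
  obtain ⟨ξ, hξ⟩ := exists_lt_norm_apply (f := F ⌈R⌉₊) (by norm_num)
    (by rw [(hF _).2]; norm_num : (1 / 2 : ℝ) < ‖F ⌈R⌉₊‖)
  have hδξ : δ ⌈R⌉₊ < ‖F ⌈R⌉₊ ξ‖ :=
    (div_le_self (by norm_num) (one_le_pow₀ one_le_two)).trans_lt (by linarith)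
  have hTyξ : ‖T y ξ‖ < 1 / 4 := hR ξ ((Nat.le_ceil R).trans (hfar _ ξ hδξ))
  have hnear := (hTy ξ).norm_sub_le_of_forall_ne (summable_geometric_two' _) (fun j => (hδ j).le)
    fun j hj => not_lt.1 fun h => Set.disjoint_left.1 (hdisj hj) h hδξ
  rw [tsum_geometric_two'] at hnear
  linarith [norm_le_norm_add_norm_sub' (F ⌈R⌉₊ ξ) (T y ξ), norm_sub_rev (F ⌈R⌉₊ ξ) (T y ξ)]
end

section
/- Let X be a reflexive infinite-dimensional closed subspace of L¹(ℝⁿ). Then for every β > 0 and every C > 0 there exists f ∈ X with Σ_{Q ∈ 𝒬} |∫_{βQ} f| < C ‖f‖_{L¹}, where 𝒬 is the collection of unit cubes with integer corners and βQ denotes the cube scaled by β. -/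
open MeasureTheory NormedSpace

/-- The cube with integer corner `c` scaled by `β`. -/
def scaledCube {n : ℕ} (β : ℝ) (c : Fin n → ℤ) : Set (EuclideanSpace ℝ (Fin n)) :=
  {x | ∀ k, x k ∈ Set.Icc (β * (c k : ℝ)) (β * ((c k : ℝ) + 1))}

/-!
The cubes overlap only in null sets, so the cube integrals `φ_c f = ∫_{βQ_c} f` satisfy
`∑_c ‖φ_c f‖ ≤ ‖f‖`. Suppose that `C ‖f‖ ≤ ∑_c ‖φ_c f‖` on `X`. A gliding hump produces unit vectors `u_k ∈ X` and pairwise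
disjoint finite blocks `B_k` of cubes such that all but `C/4` of the mass of `(φ_c u_k)_c` sits
on `B_k`, while `φ_c u_k = 0` on the earlier blocks. The block functionals
`ψ_j = ∑_{c ∈ B_j} sgn (φ_c u_j) φ_c` then sum to a bounded functional `Φ` with
`Re Φ u_k ≥ C/2` for every `k`, and `ψ_j u_k = 0` for `j < k`. Reflexivity and Banach–Alaoglu give
a weak cluster point `w` of `(u_k)`; it is killed by every `ψ_j`, hence by `Φ`, yet
`Re Φ w ≥ C/2`.
-/

open Filter

section Sums

variable {𝕜 ι : Type*} [RCLike 𝕜]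

theorem tsum_le_sum_add_of_forall_disjoint {x : ι → ℝ} (hx : 0 ≤ x) (F : Finset ι) {ε : ℝ}
    (h : ∀ s, Disjoint s F → ∑ i ∈ s, x i ≤ ε) : ∑' i, x i ≤ ∑ i ∈ F, x i + ε := by
  classical
  refine Real.tsum_le_of_sum_le hx fun t => ?_
  calc ∑ i ∈ t, x i ≤ ∑ i ∈ t ∪ F, x i :=
        Finset.sum_le_sum_of_subset_of_nonneg Finset.subset_union_left fun i _ _ => hx i
    _ = ∑ i ∈ (t ∪ F) \ F, x i + ∑ i ∈ F, x i :=
        (Finset.sum_sdiff Finset.subset_union_right).symm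
    _ ≤ ∑ i ∈ F, x i + ε := by linarith [h ((t ∪ F) \ F) Finset.sdiff_disjoint]

theorem norm_tsum_sub_le_of_forall_notMem [DecidableEq ι] {x : ι → 𝕜}
    (hx : Summable fun i => ‖x i‖) (i : ι) {ε : ℝ}
    (h : ∀ s, i ∉ s → ∑ j ∈ s, ‖x j‖ ≤ ε) : ‖∑' j, x j - x i‖ ≤ ε := by
  rw [hx.of_norm.tsum_eq_add_tsum_ite i, add_sub_cancel_left]
  refine (norm_tsum_le_tsum_norm ?_).trans
    (Real.tsum_le_of_sum_le (fun _ => norm_nonneg _) fun s => ?_)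
  · exact hx.of_nonneg_of_le (fun _ => norm_nonneg _) fun j => by split_ifs <;> simp
  · simpa [apply_ite, Finset.sum_ite, Finset.filter_ne'] using
      h (s.erase i) (Finset.notMem_erase i s)

theorem sum_norm_sum_mul_le_sum_biUnion [DecidableEq ι] {B : ℕ → Finset ι}
    (hB : Pairwise (Function.onFun Disjoint B)) {a : ℕ → ι → 𝕜} (ha : ∀ j c, ‖a j c‖ ≤ 1)
    (x : ι → 𝕜) (s : Finset ℕ) :
    ∑ j ∈ s, ‖∑ c ∈ B j, a j c * x c‖ ≤ ∑ c ∈ s.biUnion B, ‖x c‖ := by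
  rw [Finset.sum_biUnion (hB.set_pairwise _)]
  refine Finset.sum_le_sum fun j _ => (norm_sum_le _ _).trans (Finset.sum_le_sum fun c _ => ?_)
  rw [norm_mul]
  exact mul_le_of_le_one_left (norm_nonneg _) (ha j c)

end Sums

section Reflexive

variable {𝕜 V ι : Type*} [RCLike 𝕜] [NormedAddCommGroup V] [NormedSpace 𝕜 V]

theorem exists_forall_mapClusterPt_of_surjective_inclusionInDoubleDual
    (hrefl : Function.Surjective (inclusionInDoubleDual 𝕜 V))
    {α : Type*} {l : Filter α} [l.NeBot] {u : α → V} {R : ℝ} (hu : ∀ a, ‖u a‖ ≤ R) :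
    ∃ w : V, ∀ ℓ : StrongDual 𝕜 V, MapClusterPt (ℓ w) l fun a => ℓ (u a) := by
  let v : α → WeakDual 𝕜 (StrongDual 𝕜 V) := fun a =>
    StrongDual.toWeakDual (inclusionInDoubleDual 𝕜 V (u a))
  have hv : ∀ a, v a ∈ WeakDual.toStrongDual ⁻¹' Metric.closedBall 0 R := fun a =>
    (mem_closedBall_zero_iff (a := WeakDual.toStrongDual (v a))).2
      ((double_dual_bound 𝕜 V (u a)).trans (hu a))
  obtain ⟨Ξ, -, hΞ⟩ := (WeakDual.isCompact_closedBall 0 R).exists_mapClusterPt (f := l)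
    (le_principal_iff.2 (mem_map.2 (univ_mem' hv)))
  obtain ⟨w, hw⟩ := hrefl (WeakDual.toStrongDual Ξ)
  refine ⟨w, fun ℓ => ?_⟩
  rw [← dual_def 𝕜 V w ℓ, hw]
  exact hΞ.continuousAt_comp (WeakDual.eval_continuous ℓ).continuousAt (u := v)

theorem exists_norm_eq_one_forall_apply_eq_zero (hinf : ¬ FiniteDimensional 𝕜 V)
    (φ : ι → StrongDual 𝕜 V) (G : Finset ι) :
    ∃ f : V, ‖f‖ = 1 ∧ ∀ c ∈ G, φ c f = 0 := by
  let L : V →ₗ[𝕜] G → 𝕜 := LinearMap.pi fun c => (φ c : V →ₗ[𝕜] 𝕜)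
  obtain ⟨v, hv, hv0⟩ : ∃ v ∈ LinearMap.ker L, v ≠ 0 := by
    refine Submodule.exists_mem_ne_zero_of_ne_bot fun hker => hinf ?_
    exact Module.Finite.of_injective L (LinearMap.ker_eq_bot.1 hker)
  refine ⟨(‖v‖⁻¹ : 𝕜) • v, norm_smul_inv_norm hv0, fun c hc => ?_⟩
  have : φ c v = 0 := congrFun hv ⟨c, hc⟩
  simp [this]

variable (φ : ι → StrongDual 𝕜 V)

theorem summable_norm_apply_of_sum_le (hφ : ∀ g (s : Finset ι), ∑ c ∈ s, ‖φ c g‖ ≤ ‖g‖)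
    (g : V) : Summable fun c => ‖φ c g‖ :=
  summable_of_sum_le (fun _ => norm_nonneg _) (hφ g)

noncomputable def tsumCLM (hφ : ∀ g (s : Finset ι), ∑ c ∈ s, ‖φ c g‖ ≤ ‖g‖) :
    StrongDual 𝕜 V :=
  LinearMap.mkContinuous
    { toFun := fun g => ∑' c, φ c g
      map_add' := fun g h => by
        simp only [map_add]
        exact (summable_norm_apply_of_sum_le φ hφ g).of_norm.tsum_add
          (summable_norm_apply_of_sum_le φ hφ h).of_norm
      map_smul' := fun a g => by
        simp only [map_smul, smul_eq_mul, RingHom.id_apply]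
        exact tsum_mul_left }
    1 fun g => by
      rw [one_mul]
      exact (norm_tsum_le_tsum_norm (summable_norm_apply_of_sum_le φ hφ g)).trans
        (Real.tsum_le_of_sum_le (fun _ => norm_nonneg _) (hφ g))

theorem tsumCLM_apply (hφ : ∀ g (s : Finset ι), ∑ c ∈ s, ‖φ c g‖ ≤ ‖g‖) (g : V) :
    tsumCLM φ hφ g = ∑' c, φ c g := rfl

theorem exists_gliding_hump (hinf : ¬ FiniteDimensional 𝕜 V)
    (hφ : ∀ g, Summable fun c => ‖φ c g‖) (G : Finset ι) {ε : ℝ} (hε : 0 < ε) :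
    ∃ f : V, ‖f‖ = 1 ∧ (∀ c ∈ G, φ c f = 0) ∧
      ∃ F : Finset ι, Disjoint F G ∧ ∀ s, Disjoint s F → ∑ c ∈ s, ‖φ c f‖ ≤ ε := by
  classical
  obtain ⟨f, hf1, hfG⟩ := exists_norm_eq_one_forall_apply_eq_zero hinf φ G
  obtain ⟨F, hF⟩ := summable_iff_vanishing_norm.1 (hφ f) ε hε
  refine ⟨f, hf1, hfG, F \ G, Finset.sdiff_disjoint, fun s hs => ?_⟩
  have hsG : ∑ c ∈ s \ G, ‖φ c f‖ = ∑ c ∈ s, ‖φ c f‖ :=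
    Finset.sum_subset Finset.sdiff_subset fun c hcs hc => by
      simp [hfG c (by simpa [hcs] using hc)]
  have hdisj : Disjoint (s \ G) F := by
    rw [Finset.disjoint_left]
    intro c hc hcF
    rw [Finset.mem_sdiff] at hc
    exact Finset.disjoint_left.1 hs hc.1 (Finset.mem_sdiff.2 ⟨hcF, hc.2⟩)
  rw [← hsG]
  exact (le_abs_self _).trans (by simpa [Real.norm_eq_abs] using (hF _ hdisj).le)

theorem exists_seq_gliding_hump (hinf : ¬ FiniteDimensional 𝕜 V)
    (hφ : ∀ g, Summable fun c => ‖φ c g‖) {ε : ℝ} (hε : 0 < ε) :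
    ∃ (u : ℕ → V) (B : ℕ → Finset ι), (∀ k, ‖u k‖ = 1) ∧ Pairwise (Function.onFun Disjoint B) ∧
      (∀ j k, j < k → ∀ c ∈ B j, φ c (u k) = 0) ∧
      ∀ k s, Disjoint s (B k) → ∑ c ∈ s, ‖φ c (u k)‖ ≤ ε := by
  classical
  choose f hf1 hf0 F hFG hFtail using fun G => exists_gliding_hump φ hinf hφ G hε
  let G : ℕ → Finset ι := fun j => Nat.rec ∅ (fun _ G => G ∪ F G) j
  have hBG : ∀ {j k}, j < k → F (G j) ⊆ G k := fun hjk =>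
    Finset.subset_union_right.trans
      (monotone_nat_of_le_succ (f := G) (fun _ => Finset.subset_union_left) hjk)
  refine ⟨fun k => f (G k), fun k => F (G k), fun k => hf1 _, fun j k hjk => ?_,
    fun j k hjk c hc => hf0 _ c (hBG hjk hc), fun k => hFtail (G k)⟩
  rcases hjk.lt_or_gt with h | h
  · exact ((hFG (G k)).mono_right (hBG h)).symm
  · exact (hFG (G j)).mono_right (hBG h)

theorem exists_re_tsumCLM_apply_lt (hrefl : Function.Surjective (inclusionInDoubleDual 𝕜 V))
    {u : ℕ → V} {R : ℝ} (hu : ∀ k, ‖u k‖ ≤ R) (ψ : ℕ → StrongDual 𝕜 V)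
    (hψ : ∀ g (s : Finset ℕ), ∑ j ∈ s, ‖ψ j g‖ ≤ ‖g‖) (hψu : ∀ j k, j < k → ψ j (u k) = 0)
    {δ : ℝ} (hδ : 0 < δ) : ∃ k, RCLike.re (tsumCLM ψ hψ (u k)) < δ := by
  by_contra! hlarge
  obtain ⟨w, hw⟩ := exists_forall_mapClusterPt_of_surjective_inclusionInDoubleDual hrefl
    (l := atTop) hu
  have hψw : ∀ j, ψ j w = 0 := fun j =>
    isClosed_singleton.mem_of_mapClusterPt (hw (ψ j))
      ((eventually_gt_atTop j).mono fun k hjk => hψu j k hjk)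
  have hΦw : δ ≤ RCLike.re (tsumCLM ψ hψ w) :=
    (isClosed_le continuous_const RCLike.continuous_re).mem_of_mapClusterPt (hw _)
      (Eventually.of_forall hlarge)
  rw [tsumCLM_apply, funext hψw, tsum_zero, map_zero] at hΦw
  linarith

theorem exists_tsum_norm_lt_mul_norm (hrefl : Function.Surjective (inclusionInDoubleDual 𝕜 V))
    (hinf : ¬ FiniteDimensional 𝕜 V) (hφ : ∀ g (s : Finset ι), ∑ c ∈ s, ‖φ c g‖ ≤ ‖g‖)
    {C : ℝ} (hC : 0 < C) : ∃ f : V, ∑' c, ‖φ c f‖ < C * ‖f‖ := by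
  classical
  by_contra! hlower
  obtain ⟨u, B, hu1, hB, hu0, htail⟩ :=
    exists_seq_gliding_hump φ hinf (summable_norm_apply_of_sum_le φ hφ) (by positivity : 0 < C / 4)
  have hmass : ∀ k, 3 * C / 4 ≤ ∑ c ∈ B k, ‖φ c (u k)‖ := fun k => by
    have := (hlower (u k)).trans
      (tsum_le_sum_add_of_forall_disjoint (fun _ => norm_nonneg _) _ (htail k))
    rw [hu1, mul_one] at this
    linarith
  -- `a j c * φ c (u j) = ‖φ c (u j)‖`, also when `φ c (u j) = 0` (then `a j c = 0`)
  let a : ℕ → ι → 𝕜 := fun j c => (‖φ c (u j)‖ : 𝕜) / φ c (u j)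
  let ψ : ℕ → StrongDual 𝕜 V := fun j => ∑ c ∈ B j, a j c • φ c
  have hψ_apply : ∀ j g, ψ j g = ∑ c ∈ B j, a j c * φ c g := fun j g => by simp [ψ]
  have hψ_blocks : ∀ g s, ∑ j ∈ s, ‖ψ j g‖ ≤ ∑ c ∈ s.biUnion B, ‖φ c g‖ := fun g s => by
    simp only [hψ_apply]
    refine sum_norm_sum_mul_le_sum_biUnion hB (fun j c => ?_) _ s
    simp [a, norm_div, div_self_le_one]
  have hψ_self : ∀ k, ψ k (u k) = ((∑ c ∈ B k, ‖φ c (u k)‖ : ℝ) : 𝕜) := fun k => by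
    rw [hψ_apply, RCLike.ofReal_sum]
    exact Finset.sum_congr rfl fun c _ => div_mul_cancel_of_imp fun h => by simp [h]
  have hψ_later : ∀ j k, j < k → ψ j (u k) = 0 := fun j k hjk => by
    rw [hψ_apply]
    exact Finset.sum_eq_zero fun c hc => by rw [hu0 j k hjk c hc, mul_zero]
  have hψ_bound : ∀ g s, ∑ j ∈ s, ‖ψ j g‖ ≤ ‖g‖ := fun g s => (hψ_blocks g s).trans (hφ g _)
  obtain ⟨k, hk⟩ := exists_re_tsumCLM_apply_lt hrefl (fun k => (hu1 k).le) ψ hψ_bound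
    hψ_later (by positivity : 0 < C / 2)
  have hrest : ‖tsumCLM ψ hψ_bound (u k) - ψ k (u k)‖ ≤ C / 4 :=
    norm_tsum_sub_le_of_forall_notMem (summable_norm_apply_of_sum_le ψ hψ_bound _) k
      fun s hks => (hψ_blocks _ s).trans <| htail k _ <|
        (Finset.disjoint_biUnion_left _ _ _).2 fun j hj => hB (ne_of_mem_of_not_mem hj hks)
  have hre := (abs_le.1 ((RCLike.abs_re_le_norm _).trans hrest)).1
  rw [map_sub, hψ_self, RCLike.ofReal_re] at hre
  linarith [hmass k]

end Reflexive

noncomputable def setIntegralCLM {α : Type*} [MeasurableSpace α] {μ : Measure α} (s : Set α) :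
    StrongDual ℂ (Lp ℂ 1 μ) :=
  (L1.integralCLM' ℂ).comp (LpToLpRestrictCLM α ℂ ℂ μ 1 s)

theorem setIntegralCLM_apply {α : Type*} [MeasurableSpace α] {μ : Measure α} (s : Set α)
    (f : Lp ℂ 1 μ) : setIntegralCLM s f = ∫ x in s, f x ∂μ := by
  rw [setIntegralCLM, ContinuousLinearMap.comp_apply, ← L1.integral_eq', L1.integral_eq_integral]
  exact integral_congr_ae (LpToLpRestrictCLM_coeFn ℂ s f)

section Cubes

variable {n : ℕ}

theorem measurableSet_scaledCube (β : ℝ) (c : Fin n → ℤ) : MeasurableSet (scaledCube β c) := by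
  simp only [scaledCube, Set.ofPred_forall]
  exact MeasurableSet.iInter fun k =>
    measurableSet_Icc.preimage (EuclideanSpace.proj k).continuous.measurable

theorem volume_setOf_apply_eq (k : Fin n) (a : ℝ) :
    volume {x : EuclideanSpace ℝ (Fin n) | x k = a} = 0 :=
  (EuclideanSpace.volume_preserving_symm_measurableEquiv_toLp
    (Fin n)).quasiMeasurePreserving.preimage_null
    (Measure.pi_eval_preimage_null _ (Real.volume_singleton (a := a)))

theorem scaledCube_inter_subset {β : ℝ} (hβ : 0 ≤ β) {c c' : Fin n → ℤ} {k : Fin n}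
    (h : c k < c' k) : scaledCube β c ∩ scaledCube β c' ⊆ {x | x k = β * (c k + 1)} := by
  rintro x ⟨hx, hx'⟩
  have : β * (c k + 1) ≤ β * c' k := by gcongr; exact_mod_cast h
  exact le_antisymm (hx k).2 (this.trans (hx' k).1)

theorem pairwise_aedisjoint_scaledCube {β : ℝ} (hβ : 0 ≤ β) :
    Pairwise fun c c' : Fin n → ℤ => AEDisjoint volume (scaledCube β c) (scaledCube β c') := by
  intro c c' hne
  obtain ⟨k, hk⟩ := Function.ne_iff.1 hne
  rcases hk.lt_or_gt with h | h
  · exact measure_mono_null (scaledCube_inter_subset hβ h) (volume_setOf_apply_eq k _)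
  · exact AEDisjoint.symm
      (measure_mono_null (scaledCube_inter_subset hβ h) (volume_setOf_apply_eq k _))

theorem sum_norm_setIntegral_scaledCube_le {β : ℝ} (hβ : 0 ≤ β)
    (f : Lp ℂ 1 (volume : Measure (EuclideanSpace ℝ (Fin n)))) (s : Finset (Fin n → ℤ)) :
    ∑ c ∈ s, ‖∫ x in scaledCube β c, f x‖ ≤ ‖f‖ := by
  have hf := (L1.integrable_coeFn f).norm
  calc ∑ c ∈ s, ‖∫ x in scaledCube β c, f x‖
      ≤ ∑ c ∈ s, ∫ x in scaledCube β c, ‖f x‖ :=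
        Finset.sum_le_sum fun c _ => norm_integral_le_integral_norm _
    _ ≤ ∫ x in ⋃ c, scaledCube β c, ‖f x‖ :=
        sum_le_hasSum s
          (fun c _ => setIntegral_nonneg (measurableSet_scaledCube β c) fun _ _ => norm_nonneg _)
          (hasSum_integral_iUnion_ae (fun c => (measurableSet_scaledCube β c).nullMeasurableSet)
            (pairwise_aedisjoint_scaledCube hβ) hf.integrableOn)
    _ ≤ ∫ x, ‖f x‖ := setIntegral_le_integral hf (Eventually.of_forall fun _ => norm_nonneg _)
    _ = ‖f‖ := (L1.norm_eq_integral_norm f).symm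

end Cubes

theorem exists_small_cube_sums_general {n : ℕ}
    (X : Subspace ℂ (Lp ℂ 1 (volume : Measure (EuclideanSpace ℝ (Fin n)))))
    (hrefl : IsReflexiveSpace ↥X) (hinf : ¬ FiniteDimensional ℂ ↥X) :
    ∀ β > (0 : ℝ), ∀ C > (0 : ℝ), ∃ f ∈ X,
      (∑' c : Fin n → ℤ, ‖∫ x in scaledCube β c, f x‖) < C * ‖f‖ := by
  intro β hβ C hC
  obtain ⟨f, hf⟩ := exists_tsum_norm_lt_mul_norm
    (fun c => (setIntegralCLM (scaledCube β c)).comp X.subtypeL) hrefl hinf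
    (fun g s => by
      simpa only [ContinuousLinearMap.comp_apply, Submodule.subtypeL_apply, setIntegralCLM_apply,
        Submodule.coe_norm] using
        sum_norm_setIntegral_scaledCube_le hβ.le (g : Lp ℂ 1 _) s) hC
  refine ⟨f, f.2, ?_⟩
  simpa only [ContinuousLinearMap.comp_apply, Submodule.subtypeL_apply, setIntegralCLM_apply,
        Submodule.coe_norm] using hf

/-- If `X` is a reflexive infinite-dimensional closed subspace of `L¹(ℝⁿ)`,
then for all `β, C > 0` there is `f ∈ X` with
`Σ_Q |∫_{βQ} f| < C ‖f‖_{L¹}`, the sum over the grid of cubes of side `β`. -/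
theorem exists_small_cube_sums {n : ℕ}
    (X : Subspace ℂ (Lp ℂ 1 (volume : Measure (EuclideanSpace ℝ (Fin n)))))
    (hclosed : IsClosed (X : Set (Lp ℂ 1 (volume : Measure (EuclideanSpace ℝ (Fin n))))))
    (hrefl : IsReflexiveSpace ↥X) (hinf : ¬ FiniteDimensional ℂ ↥X) :
    ∀ β > (0 : ℝ), ∀ C > (0 : ℝ), ∃ f ∈ X,
      (∑' c : Fin n → ℤ, ‖∫ x in scaledCube β c, f x‖) < C * ‖f‖ :=
  exists_small_cube_sums_general X hrefl hinf
end
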